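/- Let f be an injective assignment of nonempty finite sets of nonnegative integers to the vertices of the complete graph K_n. Then f is a strong integer additive set-labeling of K_n if and only if the difference sets D_{f(v)} of the set-labels of the vertices are pairwise disjoint, i.e., D_{f(u)} ∩ D_{f(v)} = ∅ for all distinct vertices u, v. -/

import Mathlib

/-!
`|A + B| = |A| |B|` says exactly that `(a, b) ↦ a + b` is injective on `A × B`. A collision
`a + b = a' + b'` with `a < a'` is the same thing as the common difference `a' - a = b - b'`
of `A` and `B`, so the sums are distinct iff `D_A` and `D_B` are disjoint. On `K_n` every pair
of distinct vertices is an edge, which gives the theorem edge by edge.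
-/

open Finset Pointwise

/-- The difference set of a finset of naturals:
the set of positive differences of distinct elements. -/
def diffSet (A : Finset ℕ) : Finset ℕ :=
  ((A ×ˢ A).filter fun p => p.2 < p.1).image fun p => p.1 - p.2

lemma mem_diffSet {A : Finset ℕ} {d : ℕ} :
    d ∈ diffSet A ↔ ∃ a ∈ A, ∃ b ∈ A, b < a ∧ a - b = d := by
  simp only [diffSet, mem_image, mem_filter, mem_product, Prod.exists]
  constructor
  · rintro ⟨a, b, ⟨⟨ha, hb⟩, hlt⟩, rfl⟩
    exact ⟨a, ha, b, hb, hlt, rfl⟩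
  · rintro ⟨a, ha, b, hb, hlt, rfl⟩
    exact ⟨a, b, ⟨⟨ha, hb⟩, hlt⟩, rfl⟩

lemma sub_mem_diffSet {A : Finset ℕ} {a b : ℕ} (ha : a ∈ A) (hb : b ∈ A) (hlt : b < a) :
    a - b ∈ diffSet A :=
  mem_diffSet.2 ⟨a, ha, b, hb, hlt, rfl⟩

section

variable {A B : Finset ℕ}

lemma exists_add_eq_add_of_mem_diffSet {d : ℕ} (hA : d ∈ diffSet A) (hB : d ∈ diffSet B) :
    ∃ a ∈ A, ∃ a' ∈ A, ∃ b ∈ B, ∃ b' ∈ B, a < a' ∧ a + b = a' + b' := by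
  obtain ⟨a', ha', a, ha, hlt, rfl⟩ := mem_diffSet.1 hA
  obtain ⟨b, hb, b', hb', hlt', hd⟩ := mem_diffSet.1 hB
  exact ⟨a, ha, a', ha', b, hb, b', hb', hlt, by omega⟩

lemma not_disjoint_diffSet_of_add_eq_add {a a' b b' : ℕ} (ha : a ∈ A) (ha' : a' ∈ A)
    (hb : b ∈ B) (hb' : b' ∈ B) (hlt : a < a') (hsum : a + b = a' + b') :
    ¬ Disjoint (diffSet A) (diffSet B) := by
  have hdB : b - b' ∈ diffSet B := sub_mem_diffSet hb hb' (by omega)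
  have hd : a' - a = b - b' := by omega
  intro hdisj
  exact Finset.disjoint_left.1 hdisj (sub_mem_diffSet ha' ha hlt) (hd ▸ hdB)

theorem injOn_add_iff_disjoint_diffSet :
    (A ×ˢ B : Set (ℕ × ℕ)).InjOn (fun p ↦ p.1 + p.2) ↔ Disjoint (diffSet A) (diffSet B) := by
  constructor
  · intro hinj
    refine Finset.disjoint_left.2 fun d hdA hdB ↦ ?_
    obtain ⟨a, ha, a', ha', b, hb, b', hb', hlt, hsum⟩ := exists_add_eq_add_of_mem_diffSet hdA hdB
    have hpair : (a, b) = (a', b') :=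
      hinj (Set.mk_mem_prod ha hb) (Set.mk_mem_prod ha' hb') hsum
    exact hlt.ne (congrArg Prod.fst hpair)
  · rintro hdisj ⟨a, b⟩ ⟨ha, hb⟩ ⟨a', b'⟩ ⟨ha', hb'⟩ (hsum : a + b = a' + b')
    rcases lt_trichotomy a a' with hlt | rfl | hgt
    · exact absurd hdisj (not_disjoint_diffSet_of_add_eq_add ha ha' hb hb' hlt hsum)
    · rw [Nat.add_left_cancel hsum]
    · exact absurd hdisj (not_disjoint_diffSet_of_add_eq_add ha' ha hb' hb hgt hsum.symm)

theorem card_add_eq_mul_iff_disjoint_diffSet :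
    (A + B).card = A.card * B.card ↔ Disjoint (diffSet A) (diffSet B) :=
  card_add_iff.trans injOn_add_iff_disjoint_diffSet

end

theorem strong_IASL_completeGraph_iff_pairwise_disjoint_diffSets_general
    (n : ℕ) (f : Fin n → Finset ℕ) :
    (∀ u v : Fin n, (⊤ : SimpleGraph (Fin n)).Adj u v →
        (f u + f v).card = (f u).card * (f v).card) ↔
      ∀ u v : Fin n, u ≠ v → Disjoint (diffSet (f u)) (diffSet (f v)) := by
  simp only [SimpleGraph.top_adj, card_add_eq_mul_iff_disjoint_diffSet]

/-- An injective assignment of nonempty finite sets of nonnegative integers to the vertices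
of the complete graph `K_n` is a strong integer additive set-labeling iff the difference
sets of the set-labels of the vertices are pairwise disjoint. -/
theorem strong_IASL_completeGraph_iff_pairwise_disjoint_diffSets
    (n : ℕ) (f : Fin n → Finset ℕ)
    (hinj : Function.Injective f) (hne : ∀ v, (f v).Nonempty) :
    (∀ u v : Fin n, (⊤ : SimpleGraph (Fin n)).Adj u v →
        (f u + f v).card = (f u).card * (f v).card) ↔
      ∀ u v : Fin n, u ≠ v → Disjoint (diffSet (f u)) (diffSet (f v)) :=
  strong_IASL_completeGraph_iff_pairwise_disjoint_diffSets_general n f
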